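/- arXiv:2206.00552 — 3 statements merged into one kernel-verified Lean document; each statement's English description precedes it below -/
import Mathlib

section
/- Let $d \geq 2$ and let $C \subseteq \mathbb{R}^d$ be a finitely generated pointed rational cone of dimension $d$. If $x \in \mathbb{R}^d$ satisfies $x \notin C$, then there exists an extremal ray $l$ of $C$ such that $(x + l) \cap C = \emptyset$. -/
open Matrix

/-- `F` is a face of the cone `C`: `F ⊆ C`, `F` is closed under nonnegative scaling,
and for `x, y ∈ C` one has `x + y ∈ F ↔ x ∈ F ∧ y ∈ F`. -/
def IsFaceOfCone {d : ℕ} (C F : Set (Fin d → ℝ)) : Prop :=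
  F ⊆ C ∧ (∀ r : ℝ, 0 ≤ r → ∀ y ∈ F, r • y ∈ F) ∧
    ∀ x ∈ C, ∀ y ∈ C, (x + y ∈ F ↔ x ∈ F ∧ y ∈ F)

/-- An extremal ray of `C` is a one-dimensional face of `C`. -/
def IsExtremalRayOfCone {d : ℕ} (C l : Set (Fin d → ℝ)) : Prop :=
  IsFaceOfCone C l ∧ Module.finrank ℝ (Submodule.span ℝ l) = 1

private lemma sum_dotP {d : ℕ} {ι} (s : Finset ι) (f : ι → Fin d → ℝ) (a : Fin d → ℝ) :
    (∑ i ∈ s, f i) ⬝ᵥ a = ∑ i ∈ s, f i ⬝ᵥ a := by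
  classical
  induction s using Finset.induction_on with
  | empty => simp
  | insert _ _ h ih => rw [Finset.sum_insert h, Finset.sum_insert h, add_dotProduct, ih]

private lemma dotP_sum {d : ℕ} {ι} (s : Finset ι) (a : Fin d → ℝ) (f : ι → Fin d → ℝ) :
    a ⬝ᵥ (∑ i ∈ s, f i) = ∑ i ∈ s, a ⬝ᵥ f i := by
  classical
  induction s using Finset.induction_on with
  | empty => simp
  | insert _ _ h ih => rw [Finset.sum_insert h, Finset.sum_insert h, dotProduct_add, ih]

private lemma farkas {d : ℕ} {ι : Type} (s : Finset ι) (v : ι → Fin d → ℝ) (x : Fin d → ℝ)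
    (hx : ¬ ∃ c : ι → ℝ, (∀ i, 0 ≤ c i) ∧ x = ∑ i ∈ s, c i • v i) :
    ∃ a : Fin d → ℝ, (∀ i ∈ s, 0 ≤ a ⬝ᵥ v i) ∧ a ⬝ᵥ x < 0 := by
  classical
  induction s using Finset.induction_on generalizing v x with
  | empty =>
    have hx0 : x ≠ 0 := by rintro rfl; exact hx ⟨0, fun i => le_refl 0, by simp⟩
    refine ⟨-x, by simp, ?_⟩
    have h1 : 0 ≤ x ⬝ᵥ x := Finset.sum_nonneg fun i _ => mul_self_nonneg _
    have h2 : x ⬝ᵥ x ≠ 0 := fun hc => hx0 (dotProduct_self_eq_zero.mp hc)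
    rw [neg_dotProduct]
    have : 0 < x ⬝ᵥ x := lt_of_le_of_ne h1 (Ne.symm h2)
    linarith
  | @insert j t hjt ih =>
    have hxt : ¬ ∃ c : ι → ℝ, (∀ i, 0 ≤ c i) ∧ x = ∑ i ∈ t, c i • v i := by
      rintro ⟨c, hc, rfl⟩
      refine hx ⟨fun i => if i = j then 0 else c i, fun i => ?_, ?_⟩
      · dsimp only; split
        · exact le_refl 0
        · exact hc i
      · rw [Finset.sum_insert hjt]
        dsimp only
        rw [if_pos rfl, zero_smul, zero_add]
        refine (Finset.sum_congr rfl fun i hi => ?_).symm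
        rw [if_neg (show i ≠ j from fun hij => hjt (hij ▸ hi))]
    obtain ⟨a, hat, hax⟩ := ih v x hxt
    by_cases hah : 0 ≤ a ⬝ᵥ v j
    · exact ⟨a, fun i hi => by
        rcases Finset.mem_insert.mp hi with rfl | hi
        exacts [hah, hat i hi], hax⟩
    push_neg at hah
    set h := v j with hh
    have hah' : a ⬝ᵥ h ≠ 0 := ne_of_lt hah
    set T : (Fin d → ℝ) → (Fin d → ℝ) := fun z => z - ((a ⬝ᵥ z) / (a ⬝ᵥ h)) • h with hT
    have hx' : ¬ ∃ c : ι → ℝ, (∀ i, 0 ≤ c i) ∧ T x = ∑ i ∈ t, c i • (fun i => T (v i)) i := by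
      rintro ⟨c, hc, hTx⟩
      have hsum : ∑ i ∈ t, c i • T (v i)
          = (∑ i ∈ t, c i • v i) - (∑ i ∈ t, c i * ((a ⬝ᵥ v i) / (a ⬝ᵥ h))) • h := by
        rw [Finset.sum_smul]
        rw [← Finset.sum_sub_distrib]
        refine Finset.sum_congr rfl fun i _ => ?_
        rw [hT]; dsimp only
        rw [smul_sub, smul_smul]
      set lam : ℝ := (a ⬝ᵥ x) / (a ⬝ᵥ h) - ∑ i ∈ t, c i * ((a ⬝ᵥ v i) / (a ⬝ᵥ h)) with hlam
      have hlampos : 0 < lam := by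
        rw [hlam]
        have hnum : ∀ i ∈ t, c i * ((a ⬝ᵥ v i) / (a ⬝ᵥ h)) = (c i * (a ⬝ᵥ v i)) / (a ⬝ᵥ h) :=
          fun i _ => by ring
        rw [Finset.sum_congr rfl hnum, ← Finset.sum_div, ← sub_div]
        apply div_pos_of_neg_of_neg _ hah
        have : 0 ≤ ∑ i ∈ t, c i * (a ⬝ᵥ v i) :=
          Finset.sum_nonneg fun i hi => mul_nonneg (hc i) (hat i hi)
        linarith
      have hxeq : x = (∑ i ∈ t, c i • v i) + lam • h := by
        have h1 : x = T x + ((a ⬝ᵥ x) / (a ⬝ᵥ h)) • h := by rw [hT]; dsimp only; abel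
        rw [h1, hTx]
        dsimp only
        rw [hsum, hlam, sub_smul]
        abel
      refine hx ⟨fun i => if i = j then lam else c i, fun i => ?_, ?_⟩
      · dsimp only; split
        · exact le_of_lt hlampos
        · exact hc i
      · rw [Finset.sum_insert hjt]
        dsimp only
        rw [if_pos rfl, hxeq]
        have hcongr : ∑ y ∈ t, (if y = j then lam else c y) • v y = ∑ y ∈ t, c y • v y :=
          Finset.sum_congr rfl fun i hi => by
            rw [if_neg (show i ≠ j from fun hij => hjt (hij ▸ hi))]
        rw [hcongr, add_comm]
    obtain ⟨b, hbt, hbx⟩ := ih (fun i => T (v i)) (T x) hx'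
    have key : ∀ z, (b - ((b ⬝ᵥ h) / (a ⬝ᵥ h)) • a) ⬝ᵥ z = b ⬝ᵥ T z := by
      intro z
      rw [hT]; dsimp only
      rw [sub_dotProduct, smul_dotProduct, dotProduct_sub, dotProduct_smul,
        smul_eq_mul, smul_eq_mul]
      field_simp
    refine ⟨b - ((b ⬝ᵥ h) / (a ⬝ᵥ h)) • a, fun i hi => ?_, ?_⟩
    · rcases Finset.mem_insert.mp hi with rfl | hi
      · rw [key (v i)]
        have : T (v i) = 0 := by
          rw [hT]; dsimp only
          rw [← hh, div_self hah', one_smul, sub_self]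
        rw [← hh, this, dotProduct_zero]
      · rw [key (v i)]
        exact hbt i hi
    · rw [key x]; exact hbx


/-- The cone generated by a finite set of vectors. -/
private def coneOf {d : ℕ} (s : Finset (Fin d → ℝ)) : Set (Fin d → ℝ) :=
  {x | ∃ c : (Fin d → ℝ) → ℝ, (∀ g, 0 ≤ c g) ∧ x = ∑ g ∈ s, c g • g}

private lemma zero_mem_coneOf {d : ℕ} (s : Finset (Fin d → ℝ)) : 0 ∈ coneOf s :=
  ⟨0, fun _ => le_refl 0, by simp⟩

private lemma mem_coneOf_of_mem {d : ℕ} {s : Finset (Fin d → ℝ)} {g : Fin d → ℝ} (hg : g ∈ s) :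
    g ∈ coneOf s := by
  classical
  refine ⟨fun h => if h = g then 1 else 0, fun h => by dsimp only; split <;> norm_num, ?_⟩
  have : ∀ h ∈ s, (if h = g then (1:ℝ) else 0) • h = if h = g then h else 0 := by
    intro h _; split <;> simp
  rw [Finset.sum_congr rfl this, Finset.sum_ite_eq' s g (fun h => h), if_pos hg]

private lemma coneOf_smul {d : ℕ} {s : Finset (Fin d → ℝ)} {z : Fin d → ℝ} {r : ℝ}
    (hr : 0 ≤ r) (hz : z ∈ coneOf s) : r • z ∈ coneOf s := by
  obtain ⟨c, hc, rfl⟩ := hz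
  exact ⟨fun g => r * c g, fun g => mul_nonneg hr (hc g), by
    rw [Finset.smul_sum]; exact Finset.sum_congr rfl fun g _ => (smul_smul r (c g) g)⟩

private lemma coneOf_add {d : ℕ} {s : Finset (Fin d → ℝ)} {z w : Fin d → ℝ}
    (hz : z ∈ coneOf s) (hw : w ∈ coneOf s) : z + w ∈ coneOf s := by
  obtain ⟨c, hc, rfl⟩ := hz
  obtain ⟨c', hc', rfl⟩ := hw
  exact ⟨fun g => c g + c' g, fun g => add_nonneg (hc g) (hc' g), by
    rw [← Finset.sum_add_distrib]; exact Finset.sum_congr rfl fun g _ => (add_smul _ _ _).symm⟩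

private lemma coneOf_mono {d : ℕ} {s t : Finset (Fin d → ℝ)} (hst : s ⊆ t) :
    coneOf s ⊆ coneOf t := by
  classical
  rintro z ⟨c, hc, rfl⟩
  refine ⟨fun g => if g ∈ s then c g else 0, fun g => by dsimp only; split; exacts [hc g, le_refl 0], ?_⟩
  rw [← Finset.sum_subset hst (fun g _ hgs => by dsimp only; rw [if_neg hgs, zero_smul])]
  exact (Finset.sum_congr rfl fun g hg => by dsimp only; rw [if_pos hg]).symm

private lemma dot_nonneg_of_mem_coneOf {d : ℕ} {s : Finset (Fin d → ℝ)} {a z : Fin d → ℝ}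
    (ha : ∀ g ∈ s, 0 ≤ a ⬝ᵥ g) (hz : z ∈ coneOf s) : 0 ≤ a ⬝ᵥ z := by
  obtain ⟨c, hc, rfl⟩ := hz
  rw [dotP_sum]
  exact Finset.sum_nonneg fun g hg => by
    rw [dotProduct_smul, smul_eq_mul]; exact mul_nonneg (hc g) (ha g hg)

private lemma dot_eq_zero_of_mem_coneOf {d : ℕ} {s : Finset (Fin d → ℝ)} {a z : Fin d → ℝ}
    (ha : ∀ g ∈ s, a ⬝ᵥ g = 0) (hz : z ∈ coneOf s) : a ⬝ᵥ z = 0 := by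
  obtain ⟨c, hc, rfl⟩ := hz
  rw [dotP_sum]
  exact Finset.sum_eq_zero fun g hg => by
    rw [dotProduct_smul, smul_eq_mul, ha g hg, mul_zero]

private lemma coneOf_subset_span {d : ℕ} (s : Finset (Fin d → ℝ)) :
    coneOf s ⊆ (Submodule.span ℝ (s : Set (Fin d → ℝ)) : Set (Fin d → ℝ)) := by
  rintro z ⟨c, hc, rfl⟩
  exact Submodule.sum_mem _ fun g hg =>
    Submodule.smul_mem _ _ (Submodule.subset_span hg)

private lemma coneOf_inter_ker {d : ℕ} {s s' : Finset (Fin d → ℝ)} {a : Fin d → ℝ}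
    (ha : ∀ g ∈ s, 0 ≤ a ⬝ᵥ g)
    (hs' : ∀ g, g ∈ s' ↔ g ∈ s ∧ a ⬝ᵥ g = 0) :
    coneOf s' = {z | z ∈ coneOf s ∧ a ⬝ᵥ z = 0} := by
  classical
  have hsub : s' ⊆ s := fun g hg => ((hs' g).mp hg).1
  ext z
  constructor
  · intro hz
    exact ⟨coneOf_mono hsub hz,
      dot_eq_zero_of_mem_coneOf (fun g hg => ((hs' g).mp hg).2) hz⟩
  · rintro ⟨⟨c, hc, rfl⟩, hz0⟩
    rw [dotP_sum] at hz0
    have hterm : ∀ g ∈ s, 0 ≤ a ⬝ᵥ c g • g := fun g hg => by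
      rw [dotProduct_smul, smul_eq_mul]; exact mul_nonneg (hc g) (ha g hg)
    have hzero : ∀ g ∈ s, a ⬝ᵥ c g • g = 0 :=
      (Finset.sum_eq_zero_iff_of_nonneg hterm).mp hz0
    refine ⟨c, hc, ?_⟩
    rw [← Finset.sum_sdiff hsub]
    have : ∀ g ∈ s \ s', c g • g = 0 := by
      intro g hg
      rw [Finset.mem_sdiff] at hg
      have hag : a ⬝ᵥ g ≠ 0 := fun h0 => hg.2 ((hs' g).mpr ⟨hg.1, h0⟩)
      have := hzero g hg.1
      rw [dotProduct_smul, smul_eq_mul] at this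
      rcases mul_eq_zero.mp this with h | h
      · rw [h, zero_smul]
      · exact absurd h hag
    rw [Finset.sum_eq_zero this, zero_add]

private lemma isFace_trans {d : ℕ} {C F l : Set (Fin d → ℝ)}
    (hCF : IsFaceOfCone C F) (hFl : IsFaceOfCone F l) : IsFaceOfCone C l := by
  obtain ⟨hFC, hFs, hFa⟩ := hCF
  obtain ⟨hlF, hls, hla⟩ := hFl
  refine ⟨hlF.trans hFC, hls, fun p hp q hq => ?_⟩
  constructor
  · intro hpq
    have hpqF := (hFa p hp q hq).mp (hlF hpq)
    exact (hla p hpqF.1 q hpqF.2).mp hpq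
  · rintro ⟨hpl, hql⟩
    exact (hla p (hlF hpl) q (hlF hql)).mpr ⟨hpl, hql⟩

private lemma isFace_coneOf_ker {d : ℕ} {s s' : Finset (Fin d → ℝ)} {a : Fin d → ℝ}
    (ha : ∀ g ∈ s, 0 ≤ a ⬝ᵥ g)
    (hs' : ∀ g, g ∈ s' ↔ g ∈ s ∧ a ⬝ᵥ g = 0) :
    IsFaceOfCone (coneOf s) (coneOf s') := by
  have hkey := coneOf_inter_ker ha hs'
  have hsub : s' ⊆ s := fun g hg => ((hs' g).mp hg).1
  refine ⟨coneOf_mono hsub, fun r hr y hy => coneOf_smul hr hy, fun p hp q hq => ?_⟩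
  rw [hkey]
  simp only [Set.mem_setOf_eq]
  rw [dotProduct_add]
  have hp0 := dot_nonneg_of_mem_coneOf ha hp
  have hq0 := dot_nonneg_of_mem_coneOf ha hq
  constructor
  · rintro ⟨hpq, h0⟩
    have h1 : a ⬝ᵥ p = 0 ∧ a ⬝ᵥ q = 0 := by constructor <;> linarith
    exact ⟨⟨hp, h1.1⟩, hq, h1.2⟩
  · rintro ⟨⟨_, h1⟩, _, h2⟩
    exact ⟨coneOf_add hp hq, by rw [h1, h2, add_zero]⟩

private lemma exists_strict_pos {d : ℕ} (s : Finset (Fin d → ℝ))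
    (hpt : ∀ g ∈ s, g ≠ 0 → -g ∉ coneOf s) :
    ∃ b : Fin d → ℝ, ∀ g ∈ s, g ≠ 0 → 0 < b ⬝ᵥ g := by
  classical
  set s₀ := s.filter (fun g => g ≠ 0) with hs₀
  have H : ∀ g : {g // g ∈ s₀}, ∃ a : Fin d → ℝ, (∀ h ∈ s, 0 ≤ a ⬝ᵥ h) ∧ 0 < a ⬝ᵥ (g : Fin d → ℝ) := by
    rintro ⟨g, hg⟩
    rw [hs₀, Finset.mem_filter] at hg
    have hng : -g ∉ coneOf s := hpt g hg.1 hg.2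
    have : ¬ ∃ c : (Fin d → ℝ) → ℝ, (∀ i, 0 ≤ c i) ∧ -g = ∑ i ∈ s, c i • id i := by
      rintro ⟨c, hc, hcg⟩
      exact hng ⟨c, hc, by simpa using hcg⟩
    obtain ⟨a, h1, h2⟩ := farkas s id (-g) this
    refine ⟨a, fun h hh => by simpa using h1 h hh, ?_⟩
    rw [dotProduct_neg] at h2
    simpa using (by linarith : (0:ℝ) < a ⬝ᵥ g)
  choose f hf1 hf2 using H
  refine ⟨∑ g ∈ s₀.attach, f g, fun g hg hgne => ?_⟩
  have hgs₀ : g ∈ s₀ := by rw [hs₀, Finset.mem_filter]; exact ⟨hg, hgne⟩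
  rw [sum_dotP]
  refine Finset.sum_pos' (fun i _ => hf1 i g hg) ⟨⟨g, hgs₀⟩, Finset.mem_attach _ _, hf2 ⟨g, hgs₀⟩⟩
private lemma exists_extremal_ray {d : ℕ} : ∀ (n : ℕ) (s : Finset (Fin d → ℝ)),
    Module.finrank ℝ (Submodule.span ℝ (s : Set (Fin d → ℝ))) ≤ n →
    (∀ g ∈ s, g ≠ 0 → -g ∉ coneOf s) →
    (∃ g ∈ s, g ≠ 0) →
    ∃ l, IsExtremalRayOfCone (coneOf s) l ∧ l ⊆ coneOf s := by
  intro n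
  induction n with
  | zero =>
    intro s hrank hpt hne
    obtain ⟨g, hg, hgne⟩ := hne
    have h0 : Module.finrank ℝ (Submodule.span ℝ (s : Set (Fin d → ℝ))) = 0 := Nat.le_zero.mp hrank
    have hbot : Submodule.span ℝ (s : Set (Fin d → ℝ)) = ⊥ := Submodule.finrank_eq_zero.mp h0
    have hmem : g ∈ Submodule.span ℝ (s : Set (Fin d → ℝ)) :=
      Submodule.subset_span (Finset.mem_coe.mpr hg)
    rw [hbot, Submodule.mem_bot] at hmem
    exact absurd hmem hgne
  | succ n ih =>
    intro s hrank hpt hne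
    classical
    obtain ⟨b, hb⟩ := exists_strict_pos s hpt
    obtain ⟨g₀, hg₀s, hg₀⟩ := hne
    have hbg₀ : 0 < b ⬝ᵥ g₀ := hb g₀ hg₀s hg₀
    set v := (b ⬝ᵥ g₀)⁻¹ • g₀ with hv
    have hv0 : v ≠ 0 := smul_ne_zero (inv_ne_zero (ne_of_gt hbg₀)) hg₀
    have hvmem : v ∈ coneOf s := coneOf_smul (inv_nonneg.mpr hbg₀.le) (mem_coneOf_of_mem hg₀s)
    by_cases hall : ∀ g ∈ s, g ≠ 0 → (b ⬝ᵥ g)⁻¹ • g = v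
    · -- all generators lie on a single ray
      set l : Set (Fin d → ℝ) := {y | ∃ t : ℝ, 0 ≤ t ∧ y = t • v} with hldef
      have hcl : coneOf s = l := by
        ext z
        constructor
        · rintro ⟨c, hc, rfl⟩
          have hterm : ∀ g ∈ s,
              c g • g = (if g = (0 : Fin d → ℝ) then 0 else c g * (b ⬝ᵥ g)) • v := by
            intro g hg
            by_cases hg0 : g = 0
            · subst hg0; simp
            · rw [if_neg hg0]
              have hbg : (0:ℝ) < b ⬝ᵥ g := hb g hg hg0
              have h2 : g = (b ⬝ᵥ g) • v := by
                rw [← hall g hg hg0, smul_smul, mul_inv_cancel₀ (ne_of_gt hbg), one_smul]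
              conv_rhs => rw [mul_smul, ← h2]
          rw [Finset.sum_congr rfl hterm, ← Finset.sum_smul]
          refine ⟨_, Finset.sum_nonneg fun g hg => ?_, rfl⟩
          split
          · exact le_rfl
          · next hg0 => exact mul_nonneg (hc g) (hb g hg hg0).le
        · rintro ⟨t, ht, rfl⟩
          exact coneOf_smul ht hvmem
      have hface : IsFaceOfCone (coneOf s) l := by
        refine ⟨by rw [hcl], fun r hr y hy => ?_, fun p hp q hq => ?_⟩
        · obtain ⟨t, ht, rfl⟩ := hy
          exact ⟨r * t, mul_nonneg hr ht, smul_smul r t v⟩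
        · constructor
          · intro _; rw [hcl] at hp hq; exact ⟨hp, hq⟩
          · rintro ⟨⟨t₁, ht₁, rfl⟩, ⟨t₂, ht₂, rfl⟩⟩
            exact ⟨t₁ + t₂, add_nonneg ht₁ ht₂, (add_smul t₁ t₂ v).symm⟩
      have hspan : Submodule.span ℝ l = Submodule.span ℝ {v} := by
        apply le_antisymm
        · rw [Submodule.span_le]
          rintro y ⟨t, ht, rfl⟩
          exact Submodule.mem_span_singleton.mpr ⟨t, rfl⟩
        · exact Submodule.span_mono
            (Set.singleton_subset_iff.mpr ⟨1, zero_le_one, (one_smul ℝ v).symm⟩)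
      refine ⟨l, ⟨hface, ?_⟩, by rw [hcl]⟩
      rw [hspan]
      exact finrank_span_singleton hv0
    · -- at least two distinct rays among the generators: cut by a functional
      push_neg at hall
      obtain ⟨g₁, hg₁s, hg₁0, hg₁v⟩ := hall
      have hbg₁ : 0 < b ⬝ᵥ g₁ := hb g₁ hg₁s hg₁0
      obtain ⟨k, hk⟩ := Function.ne_iff.mp hg₁v
      set μ : (Fin d → ℝ) → ℝ := fun g => (b ⬝ᵥ g)⁻¹ * g k with hμ
      have hμ₁₀ : μ g₁ ≠ μ g₀ := by
        have e₁ : μ g₁ = ((b ⬝ᵥ g₁)⁻¹ • g₁) k := by rw [hμ]; simp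
        have e₀ : μ g₀ = v k := by rw [hμ, hv]; simp
        rw [e₁, e₀]; exact hk
      set s₀ := s.filter (fun g => g ≠ 0) with hs₀def
      have hg₀s₀ : g₀ ∈ s₀ := Finset.mem_filter.mpr ⟨hg₀s, hg₀⟩
      have hg₁s₀ : g₁ ∈ s₀ := Finset.mem_filter.mpr ⟨hg₁s, hg₁0⟩
      obtain ⟨gm, hgm, hmin⟩ := Finset.exists_min_image s₀ μ ⟨g₀, hg₀s₀⟩
      have hgmS : gm ∈ s ∧ gm ≠ 0 := Finset.mem_filter.mp hgm
      set m := μ gm with hm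
      set ek : Fin d → ℝ := fun j => if j = k then 1 else 0 with hek
      have hekdot : ∀ g : Fin d → ℝ, ek ⬝ᵥ g = g k := by
        intro g
        rw [hek]
        simp [dotProduct, ite_mul, Finset.sum_ite_eq']
      set a : Fin d → ℝ := ek - m • b with ha
      have hadot : ∀ g, a ⬝ᵥ g = g k - m * (b ⬝ᵥ g) := by
        intro g
        rw [ha, sub_dotProduct, smul_dotProduct, smul_eq_mul, hekdot]
      have hfact : ∀ g ∈ s, g ≠ 0 → a ⬝ᵥ g = (b ⬝ᵥ g) * (μ g - m) := by
        intro g hg hg0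
        have hbg : (0:ℝ) < b ⬝ᵥ g := hb g hg hg0
        rw [hadot g, hμ]
        dsimp only
        field_simp
      have haG : ∀ g ∈ s, 0 ≤ a ⬝ᵥ g := by
        intro g hg
        by_cases hg0 : g = 0
        · subst hg0; rw [dotProduct_zero]
        · rw [hfact g hg hg0]
          exact mul_nonneg (hb g hg hg0).le
            (sub_nonneg.mpr (hmin g (Finset.mem_filter.mpr ⟨hg, hg0⟩)))
      have hagm : a ⬝ᵥ gm = 0 := by
        rw [hfact gm hgmS.1 hgmS.2, sub_eq_zero.mpr hm.symm, mul_zero]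
      have hgt : m < μ g₀ ∨ m < μ g₁ := by
        rcases eq_or_lt_of_le (hmin g₀ hg₀s₀) with h0 | h0
        · rcases eq_or_lt_of_le (hmin g₁ hg₁s₀) with h1 | h1
          · exact absurd (h1.symm.trans h0) hμ₁₀
          · exact Or.inr h1
        · exact Or.inl h0
      obtain ⟨g', hg's, hg'0, hg'gt⟩ : ∃ g' ∈ s, g' ≠ 0 ∧ m < μ g' := by
        rcases hgt with h | h
        exacts [⟨g₀, hg₀s, hg₀, h⟩, ⟨g₁, hg₁s, hg₁0, h⟩]
      have hag' : 0 < a ⬝ᵥ g' := by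
        rw [hfact g' hg's hg'0]
        exact mul_pos (hb g' hg's hg'0) (sub_pos.mpr hg'gt)
      set s' := s.filter (fun g => a ⬝ᵥ g = 0) with hs'def
      have hs' : ∀ g, g ∈ s' ↔ g ∈ s ∧ a ⬝ᵥ g = 0 := fun g => by
        rw [hs'def, Finset.mem_filter]
      obtain ⟨φ, hφ⟩ : ∃ φ : (Fin d → ℝ) →ₗ[ℝ] ℝ, ∀ z, φ z = a ⬝ᵥ z :=
        ⟨{ toFun := fun z => a ⬝ᵥ z,
           map_add' := fun u w => dotProduct_add a u w,
           map_smul' := fun r u => by simp [dotProduct_smul] }, fun z => rfl⟩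
      have hspan' : Submodule.span ℝ (s' : Set (Fin d → ℝ)) ≤ LinearMap.ker φ := by
        rw [Submodule.span_le]
        intro g hg
        rw [SetLike.mem_coe, LinearMap.mem_ker, hφ]
        exact ((hs' g).mp (Finset.mem_coe.mp hg)).2
      have hlt : Submodule.span ℝ (s' : Set (Fin d → ℝ)) < Submodule.span ℝ (s : Set (Fin d → ℝ)) := by
        refine lt_of_le_of_ne
          (Submodule.span_mono (Finset.coe_subset.mpr (Finset.filter_subset _ s))) ?_
        intro hEq
        have hmem : g' ∈ Submodule.span ℝ (s' : Set (Fin d → ℝ)) :=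
          hEq ▸ Submodule.subset_span (Finset.mem_coe.mpr hg's)
        have := hspan' hmem
        rw [LinearMap.mem_ker, hφ] at this
        exact absurd this (ne_of_gt hag')
      have hrank' : Module.finrank ℝ (Submodule.span ℝ (s' : Set (Fin d → ℝ))) ≤ n := by
        have h1 := Submodule.finrank_lt_finrank_of_lt hlt
        omega
      have hpt' : ∀ g ∈ s', g ≠ 0 → -g ∉ coneOf s' := fun g hg hg0 hmem =>
        hpt g ((hs' g).mp hg).1 hg0 (coneOf_mono (Finset.filter_subset _ s) hmem)
      obtain ⟨l, hlext, hlsub⟩ := ih s' hrank' hpt' ⟨gm, (hs' gm).mpr ⟨hgmS.1, hagm⟩, hgmS.2⟩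
      exact ⟨l, ⟨isFace_trans (isFace_coneOf_ker haG hs') hlext.1, hlext.2⟩,
        hlsub.trans (coneOf_mono (Finset.filter_subset _ s))⟩
private lemma dot_self_pos {d : ℕ} {v : Fin d → ℝ} (h : v ≠ 0) : 0 < v ⬝ᵥ v := by
  have h1 : 0 ≤ v ⬝ᵥ v := Finset.sum_nonneg fun i _ => mul_self_nonneg _
  have h2 : v ⬝ᵥ v ≠ 0 := fun hc => h (dotProduct_self_eq_zero.mp hc)
  exact lt_of_le_of_ne h1 (Ne.symm h2)

/-- if `d ≥ 2`, `C ⊆ ℝ^d` is a finitely generated pointed rational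
cone of dimension `d` and `x ∉ C`, then there is an extremal ray `l` of `C` with
`(x + l) ∩ C = ∅`. -/
theorem cone_extremal_ray_avoids {d : ℕ} (hd : 2 ≤ d)
    (G : Finset (Fin d → ℝ))
    (hrat : ∀ g ∈ G, ∀ i, ∃ q : ℚ, g i = (q : ℝ))
    (C : Set (Fin d → ℝ))
    (hC : C = {x | ∃ c : (Fin d → ℝ) → ℝ, (∀ g, 0 ≤ c g) ∧ x = ∑ g ∈ G, c g • g})
    (hpointed : C ∩ (-C) = {0})
    (hdim : Module.finrank ℝ (Submodule.span ℝ C) = d)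
    (x : Fin d → ℝ) (hx : x ∉ C) :
    ∃ l : Set (Fin d → ℝ), IsExtremalRayOfCone C l ∧ ∀ y ∈ l, x + y ∉ C := by
  classical
  have hCG : C = coneOf G := hC
  have hfinpi : Module.finrank ℝ (Fin d → ℝ) = d := by
    rw [Module.finrank_pi]; simp
  have hx0 : x ≠ 0 := by
    intro h
    rw [hCG] at hx
    exact hx (h ▸ zero_mem_coneOf G)
  -- Farkas: separating functional a₀
  have hxG : ¬ ∃ c : (Fin d → ℝ) → ℝ, (∀ i, 0 ≤ c i) ∧ x = ∑ i ∈ G, c i • id i := by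
    rintro ⟨c, h1, h2⟩
    rw [hCG] at hx
    exact hx ⟨c, h1, by simpa using h2⟩
  obtain ⟨a₀, ha₀G', ha₀x⟩ := farkas G id x hxG
  have ha₀G : ∀ g ∈ G, 0 ≤ a₀ ⬝ᵥ g := fun g hg => by simpa using ha₀G' g hg
  have hGsubC : ∀ g ∈ G, g ∈ C := fun g hg => by
    rw [hCG]; exact mem_coneOf_of_mem hg
  -- span of G is everything
  have hGtop : Submodule.span ℝ (G : Set (Fin d → ℝ)) = ⊤ := by
    have hspan_eq : Submodule.span ℝ (G : Set (Fin d → ℝ)) = Submodule.span ℝ C := by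
      apply le_antisymm
      · exact Submodule.span_mono fun g hg => hGsubC g (Finset.mem_coe.mp hg)
      · rw [Submodule.span_le]
        intro z hz
        rw [hCG] at hz
        exact coneOf_subset_span G hz
    apply Submodule.eq_top_of_finrank_eq
    rw [hspan_eq, hdim, hfinpi]
  -- some generator outside the line through x
  obtain ⟨g₀, hg₀G, hg₀span⟩ : ∃ g₀ ∈ G, g₀ ∉ Submodule.span ℝ {x} := by
    by_contra h
    push_neg at h
    have hle : Submodule.span ℝ (G : Set (Fin d → ℝ)) ≤ Submodule.span ℝ {x} :=
      Submodule.span_le.mpr fun g hg => h g (Finset.mem_coe.mp hg)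
    rw [hGtop] at hle
    have h1 := Submodule.finrank_mono hle
    rw [finrank_top, hfinpi, finrank_span_singleton hx0] at h1
    omega
  have hg₀0 : g₀ ≠ 0 := fun h => hg₀span (h ▸ Submodule.zero_mem _)
  have hxx : 0 < x ⬝ᵥ x := dot_self_pos hx0
  -- the functional u vanishing on x and negative on g₀
  set u := (g₀ ⬝ᵥ x) • x - (x ⬝ᵥ x) • g₀ with hu
  have hux : u ⬝ᵥ x = 0 := by
    rw [hu, sub_dotProduct, smul_dotProduct, smul_dotProduct, smul_eq_mul, smul_eq_mul,
      dotProduct_comm g₀ x]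
    ring
  have hu0 : u ≠ 0 := by
    intro h
    rw [hu, sub_eq_zero] at h
    apply hg₀span
    rw [Submodule.mem_span_singleton]
    refine ⟨(x ⬝ᵥ x)⁻¹ * (g₀ ⬝ᵥ x), ?_⟩
    rw [mul_smul, h, ← mul_smul, inv_mul_cancel₀ (ne_of_gt hxx), one_smul]
  have huu : 0 < u ⬝ᵥ u := dot_self_pos hu0
  have hug₀ : u ⬝ᵥ g₀ < 0 := by
    have hexp : u ⬝ᵥ u = (g₀ ⬝ᵥ x) * (u ⬝ᵥ x) - (x ⬝ᵥ x) * (u ⬝ᵥ g₀) := by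
      nth_rewrite 2 [hu]
      rw [dotProduct_sub, dotProduct_smul, dotProduct_smul, smul_eq_mul, smul_eq_mul]
    rw [hux, mul_zero, zero_sub] at hexp
    nlinarith
  -- tilt a₀ until it touches the cone
  set sneg := G.filter (fun g => u ⬝ᵥ g < 0) with hsneg
  have hg₀neg : g₀ ∈ sneg := Finset.mem_filter.mpr ⟨hg₀G, hug₀⟩
  obtain ⟨gh, hgh, hghmin⟩ :=
    Finset.exists_min_image sneg (fun g => (a₀ ⬝ᵥ g) / (-(u ⬝ᵥ g))) ⟨g₀, hg₀neg⟩
  have hghG : gh ∈ G := (Finset.mem_filter.mp hgh).1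
  have hugh : u ⬝ᵥ gh < 0 := (Finset.mem_filter.mp hgh).2
  have hgh0 : gh ≠ 0 := by
    intro h
    rw [h, dotProduct_zero] at hugh
    exact lt_irrefl 0 hugh
  set tstar := (a₀ ⬝ᵥ gh) / (-(u ⬝ᵥ gh)) with hts
  have hts0 : 0 ≤ tstar := div_nonneg (ha₀G gh hghG) (by linarith)
  set astar := a₀ + tstar • u with hastar
  have hastardot : ∀ z, astar ⬝ᵥ z = a₀ ⬝ᵥ z + tstar * (u ⬝ᵥ z) := fun z => by
    rw [hastar, add_dotProduct, smul_dotProduct, smul_eq_mul]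
  have hastarx : astar ⬝ᵥ x < 0 := by
    rw [hastardot, hux, mul_zero, add_zero]; exact ha₀x
  have hastarG : ∀ g ∈ G, 0 ≤ astar ⬝ᵥ g := by
    intro g hg
    rw [hastardot]
    by_cases hug : u ⬝ᵥ g < 0
    · have hmin := hghmin g (Finset.mem_filter.mpr ⟨hg, hug⟩)
      have h2 : tstar * (-(u ⬝ᵥ g)) ≤ a₀ ⬝ᵥ g :=
        (le_div_iff₀ (by linarith : (0:ℝ) < -(u ⬝ᵥ g))).mp hmin
      linarith
    · push_neg at hug
      exact add_nonneg (ha₀G g hg) (mul_nonneg hts0 hug)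
  have hastargh : astar ⬝ᵥ gh = 0 := by
    rw [hastardot, hts]
    have hne : -(u ⬝ᵥ gh) ≠ 0 := by linarith
    field_simp
    rw [div_self (ne_of_lt hugh), add_neg_cancel, mul_zero]
  -- the face and its extremal ray
  set s₀ := G.filter (fun g => astar ⬝ᵥ g = 0) with hs₀
  have hs₀iff : ∀ g, g ∈ s₀ ↔ g ∈ G ∧ astar ⬝ᵥ g = 0 := fun g => by
    rw [hs₀, Finset.mem_filter]
  have hghs₀ : gh ∈ s₀ := (hs₀iff gh).mpr ⟨hghG, hastargh⟩
  have hpt₀ : ∀ g ∈ s₀, g ≠ 0 → -g ∉ coneOf s₀ := by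
    intro g hg hg0 hmem
    have hgC : g ∈ C := hGsubC g ((hs₀iff g).mp hg).1
    have hgnC : g ∈ -C := Set.mem_neg.mpr (by
      rw [hCG]
      exact coneOf_mono (Finset.filter_subset _ G) hmem)
    have hmem0 : g ∈ C ∩ (-C) := ⟨hgC, hgnC⟩
    rw [hpointed] at hmem0
    exact hg0 (Set.mem_singleton_iff.mp hmem0)
  obtain ⟨l, hlext, hlsub⟩ := exists_extremal_ray
    (Module.finrank ℝ (Submodule.span ℝ (s₀ : Set (Fin d → ℝ)))) s₀ le_rfl hpt₀
    ⟨gh, hghs₀, hgh0⟩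
  have hface : IsFaceOfCone C (coneOf s₀) := by
    rw [hCG]
    exact isFace_coneOf_ker hastarG hs₀iff
  refine ⟨l, ⟨isFace_trans hface hlext.1, hlext.2⟩, ?_⟩
  intro y hy hxyC
  have hy₀ : astar ⬝ᵥ y = 0 :=
    dot_eq_zero_of_mem_coneOf (fun g hg => ((hs₀iff g).mp hg).2) (hlsub hy)
  rw [hCG] at hxyC
  have h1 : 0 ≤ astar ⬝ᵥ (x + y) := dot_nonneg_of_mem_coneOf hastarG hxyC
  rw [dotProduct_add, hy₀, add_zero] at h1
  linarith
end

section
/- Let $n \geq 2$ and let $R$ be the Stanley-Reisner ring of the path with $n$ edges, i.e., $R = \Bbbk[x_1,\dots,x_{n+1}]/(x_i x_j : |i-j| \geq 2)$. Then the element $g = \sum_{k=1}^{n} x_k^2 x_{k+1}^2$ is a non-zerodivisor of $R$. -/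
noncomputable section

open MvPolynomial

/-- The Stanley-Reisner ideal of the path with `n` edges on the vertices
`x₁, …, x_{n+1}`: generated by the monomials `xᵢxⱼ` with `|i - j| ≥ 2`. -/
def pathIdeal (𝕜 : Type*) [Field 𝕜] (n : ℕ) : Ideal (MvPolynomial (Fin (n + 1)) 𝕜) :=
  Ideal.span {x | ∃ i j : Fin (n + 1), (i : ℕ) + 2 ≤ (j : ℕ) ∧ x = X i * X j}

namespace PathNZD

open Finsupp

variable {𝕜 : Type*} [Field 𝕜] {n : ℕ}

/-- The substitution sending the edge `{k, k+1}` onto two variables and all other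
variables to `0`. -/
def fk (𝕜 : Type*) [Field 𝕜] {n : ℕ} (k : Fin n) (i : Fin (n + 1)) :
    MvPolynomial (Fin 2) 𝕜 :=
  if i = k.castSucc then X 0 else if i = k.succ then X 1 else 0

lemma castSucc_ne_succ (k : Fin n) : k.castSucc ≠ k.succ := by
  simp [Fin.ext_iff]

lemma fk_castSucc (k : Fin n) : fk 𝕜 k k.castSucc = X 0 := by simp [fk]

lemma fk_succ (k : Fin n) : fk 𝕜 k k.succ = X 1 := by
  simp [fk, (castSucc_ne_succ k).symm]

lemma fk_eq_zero {k : Fin n} {i : Fin (n + 1)} (h1 : i ≠ k.castSucc) (h2 : i ≠ k.succ) :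
    fk 𝕜 k i = 0 := by simp [fk, h1, h2]

lemma single_add_single_inj {α : Type*} {x y : α} (hxy : x ≠ y) {A B a b : ℕ} :
    Finsupp.single x A + Finsupp.single y B = Finsupp.single x a + Finsupp.single y b ↔
      A = a ∧ B = b := by
  constructor
  · intro h
    constructor
    · have := DFunLike.congr_fun h x
      simpa [Finsupp.single_apply, hxy, hxy.symm] using this
    · have := DFunLike.congr_fun h y
      simpa [Finsupp.single_apply, hxy, hxy.symm] using this
  · rintro ⟨rfl, rfl⟩; rfl

lemma eq_two_single (m : Fin (n + 1) →₀ ℕ) (k : Fin n)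
    (h : ∀ i ∈ m.support, i = k.castSucc ∨ i = k.succ) :
    m = Finsupp.single k.castSucc (m k.castSucc) + Finsupp.single k.succ (m k.succ) := by
  ext i
  rw [Finsupp.add_apply, Finsupp.single_apply, Finsupp.single_apply]
  by_cases h1 : i = k.castSucc
  · subst h1
    simp [castSucc_ne_succ k, (castSucc_ne_succ k).symm]
  · by_cases h2 : i = k.succ
    · subst h2
      simp [castSucc_ne_succ k, (castSucc_ne_succ k).symm]
    · have : m i = 0 := by
        by_contra hmi
        rcases h i (Finsupp.mem_support_iff.mpr hmi) with h' | h' <;> simp_all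
      simp [this, Ne.symm h1, Ne.symm h2]

/-- The key computation: coefficients of the image under the substitution. -/
lemma coeff_aeval (k : Fin n) (p : MvPolynomial (Fin (n + 1)) 𝕜) (a b : ℕ) :
    coeff (Finsupp.single 0 a + Finsupp.single 1 b) (aeval (fk 𝕜 k) p) =
      coeff (Finsupp.single k.castSucc a + Finsupp.single k.succ b) p := by
  induction p using MvPolynomial.induction_on' with
  | add p q hp hq => simp only [map_add, coeff_add, hp, hq]
  | monomial m c =>
    by_cases hm : ∀ i ∈ m.support, i = k.castSucc ∨ i = k.succ
    · have hmeq := eq_two_single m k hm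
      have hmon : (monomial m c : MvPolynomial (Fin (n + 1)) 𝕜) =
          C c * X k.castSucc ^ (m k.castSucc) * X k.succ ^ (m k.succ) := by
        conv_lhs => rw [hmeq]
        rw [monomial_add_single, ← zero_add (Finsupp.single k.castSucc (m k.castSucc)),
          monomial_add_single, monomial_zero']
      have himg : aeval (fk 𝕜 k) (monomial m c) =
          monomial (Finsupp.single (0 : Fin 2) (m k.castSucc) +
            Finsupp.single (1 : Fin 2) (m k.succ)) c := by
        rw [hmon]
        rw [map_mul, map_mul, map_pow, map_pow, aeval_X, aeval_X, fk_castSucc, fk_succ,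
          aeval_C, monomial_add_single, ← zero_add (Finsupp.single (0 : Fin 2) (m k.castSucc)),
          monomial_add_single, monomial_zero']
        rfl
      rw [himg, coeff_monomial, coeff_monomial]
      by_cases hab : m k.castSucc = a ∧ m k.succ = b
      · obtain ⟨ha, hb⟩ := hab
        have hc1 : Finsupp.single (0 : Fin 2) (m k.castSucc) +
            Finsupp.single (1 : Fin 2) (m k.succ) =
            Finsupp.single (0 : Fin 2) a + Finsupp.single (1 : Fin 2) b := by rw [ha, hb]
        have hc2 : m = Finsupp.single k.castSucc a + Finsupp.single k.succ b := by
          rw [← ha, ← hb]; exact hmeq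
        rw [if_pos hc1, if_pos hc2]
      · rw [if_neg, if_neg]
        · intro h
          exact hab ((single_add_single_inj (castSucc_ne_succ k)).mp (hmeq.symm.trans h))
        · intro h
          exact hab ((single_add_single_inj (by decide : (0 : Fin 2) ≠ 1)).mp h)
    · push_neg at hm
      obtain ⟨i, hi, hik1, hik2⟩ := hm
      have h0 : aeval (fk 𝕜 k) (monomial m c) = 0 := by
        rw [aeval_monomial]
        refine mul_eq_zero_of_right _ ?_
        refine Finset.prod_eq_zero hi ?_
        show fk 𝕜 k i ^ m i = 0
        rw [fk_eq_zero hik1 hik2, zero_pow (Finsupp.mem_support_iff.mp hi)]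
      rw [h0, coeff_zero, coeff_monomial, if_neg]
      intro h
      have := DFunLike.congr_fun h i
      rw [Finsupp.add_apply, Finsupp.single_apply, Finsupp.single_apply,
        if_neg (Ne.symm hik1), if_neg (Ne.symm hik2)] at this
      exact Finsupp.mem_support_iff.mp hi this

lemma pathIdeal_le_ker (k : Fin n) :
    pathIdeal 𝕜 n ≤ RingHom.ker (aeval (fk 𝕜 k) : MvPolynomial (Fin (n + 1)) 𝕜 →ₐ[𝕜]
      MvPolynomial (Fin 2) 𝕜).toRingHom := by
  rw [pathIdeal, Ideal.span_le]
  rintro x ⟨i, j, hij, rfl⟩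
  simp only [SetLike.mem_coe, RingHom.mem_ker, AlgHom.toRingHom_eq_coe, RingHom.coe_coe,
    map_mul, aeval_X]
  by_cases hi : (i : ℕ) = (k : ℕ) ∨ (i : ℕ) = (k : ℕ) + 1
  · have hj : fk 𝕜 k j = 0 := by
      apply fk_eq_zero
      · intro h
        have : (j : ℕ) = (k : ℕ) := by rw [h]; simp
        omega
      · intro h
        have : (j : ℕ) = (k : ℕ) + 1 := by rw [h]; simp
        omega
    rw [hj, mul_zero]
  · push_neg at hi
    have hzi : fk 𝕜 k i = 0 := by
      apply fk_eq_zero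
      · intro h; exact hi.1 (by rw [h]; simp)
      · intro h; exact hi.2 (by rw [h]; simp)
    rw [hzi, zero_mul]

lemma exists_edge (hn : 1 ≤ n) (m : Fin (n + 1) →₀ ℕ)
    (h : ∀ i j : Fin (n + 1), (i : ℕ) + 2 ≤ (j : ℕ) → m i = 0 ∨ m j = 0) :
    ∃ k : Fin n, ∀ i ∈ m.support, i = k.castSucc ∨ i = k.succ := by
  by_cases hs : m.support.Nonempty
  · set a := m.support.min' hs with ha
    have hmem : ∀ i ∈ m.support, (i : ℕ) = a ∨ (i : ℕ) = (a : ℕ) + 1 := by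
      intro i hi
      have h1 : a ≤ i := m.support.min'_le i hi
      have h2 : ¬ ((a : ℕ) + 2 ≤ (i : ℕ)) := by
        intro hc
        rcases h a i hc with h' | h'
        · exact Finsupp.mem_support_iff.mp (m.support.min'_mem hs) h'
        · exact Finsupp.mem_support_iff.mp hi h'
      rw [Fin.le_def] at h1
      omega
    by_cases hlt : (a : ℕ) < n
    · refine ⟨⟨(a : ℕ), hlt⟩, fun i hi => ?_⟩
      rcases hmem i hi with h' | h' <;> [left; right] <;>
        (apply Fin.ext; simp only [Fin.coe_castSucc, Fin.val_succ]; omega)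
    · have han : (a : ℕ) = n := by have := a.isLt; omega
      refine ⟨⟨n - 1, by omega⟩, fun i hi => ?_⟩
      rcases hmem i hi with h' | h'
      · right; apply Fin.ext; simp only [Fin.val_succ]; omega
      · exfalso; have := i.isLt; omega
  · rw [Finset.not_nonempty_iff_eq_empty] at hs
    exact ⟨⟨0, hn⟩, fun i hi => by rw [hs] at hi; exact absurd hi (Finset.notMem_empty i)⟩

lemma X_mul_X (i j : Fin (n + 1)) :
    (X i * X j : MvPolynomial (Fin (n + 1)) 𝕜) =
      monomial (Finsupp.single i 1 + Finsupp.single j 1) 1 := by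
  rw [← pow_one (X i (R := 𝕜)), ← pow_one (X j (R := 𝕜)), X_pow_eq_monomial,
    X_pow_eq_monomial, monomial_mul, one_mul]

lemma pathIdeal_eq_span_monomial :
    pathIdeal 𝕜 n = Ideal.span ((fun s => monomial s (1 : 𝕜)) ''
      {e : Fin (n + 1) →₀ ℕ | ∃ i j : Fin (n + 1), (i : ℕ) + 2 ≤ (j : ℕ) ∧
        e = Finsupp.single i 1 + Finsupp.single j 1}) := by
  rw [pathIdeal]
  congr 1
  ext x
  constructor
  · rintro ⟨i, j, hij, rfl⟩
    exact ⟨Finsupp.single i 1 + Finsupp.single j 1, ⟨i, j, hij, rfl⟩, (X_mul_X i j).symm⟩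
  · rintro ⟨e, ⟨i, j, hij, rfl⟩, rfl⟩
    exact ⟨i, j, hij, (X_mul_X i j).symm⟩

lemma exists_aeval_ne_zero (hn : 1 ≤ n) {p : MvPolynomial (Fin (n + 1)) 𝕜}
    (hp : p ∉ pathIdeal 𝕜 n) : ∃ k : Fin n, aeval (fk 𝕜 k) p ≠ 0 := by
  rw [pathIdeal_eq_span_monomial, mem_ideal_span_monomial_image] at hp
  push_neg at hp
  obtain ⟨m, hm, hdvd⟩ := hp
  have hcond : ∀ i j : Fin (n + 1), (i : ℕ) + 2 ≤ (j : ℕ) → m i = 0 ∨ m j = 0 := by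
    intro i j hij
    by_contra hc
    push_neg at hc
    refine hdvd (Finsupp.single i 1 + Finsupp.single j 1) ⟨i, j, hij, rfl⟩ ?_
    intro x
    rw [Finsupp.add_apply, Finsupp.single_apply, Finsupp.single_apply]
    by_cases h1 : i = x <;> by_cases h2 : j = x <;>
      simp_all <;> omega
  obtain ⟨k, hk⟩ := exists_edge hn m hcond
  refine ⟨k, fun h0 => ?_⟩
  have := coeff_aeval k p (m k.castSucc) (m k.succ)
  rw [h0, coeff_zero, ← eq_two_single m k hk] at this
  exact Finsupp.mem_support_iff.mp hm this.symm

end PathNZD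

/-- from Lemma 5.3: in the Stanley-Reisner ring of the path with
`n ≥ 2` edges, the element `g = ∑_{k=1}^{n} x_k² x_{k+1}²` is a non-zerodivisor. -/
theorem path_nonzerodivisor (𝕜 : Type*) [Field 𝕜] (n : ℕ) (hn : 2 ≤ n) :
    Ideal.Quotient.mk (pathIdeal 𝕜 n)
        (∑ k : Fin n, X k.castSucc ^ 2 * X k.succ ^ 2) ∈
      nonZeroDivisors (MvPolynomial (Fin (n + 1)) 𝕜 ⧸ pathIdeal 𝕜 n) := by
  open PathNZD in
  rw [mem_nonZeroDivisors_iff_right]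
  intro z hz
  obtain ⟨r, rfl⟩ := Ideal.Quotient.mk_surjective z
  rw [← map_mul, Ideal.Quotient.eq_zero_iff_mem] at hz
  rw [Ideal.Quotient.eq_zero_iff_mem]
  by_contra hr
  obtain ⟨k, hk⟩ := PathNZD.exists_aeval_ne_zero (by omega) hr
  have h1 : aeval (PathNZD.fk 𝕜 k) (r * ∑ j : Fin n, X j.castSucc ^ 2 * X j.succ ^ 2) = 0 :=
    PathNZD.pathIdeal_le_ker k hz
  rw [map_mul, map_sum] at h1
  have hg : ∑ j : Fin n, aeval (PathNZD.fk 𝕜 k)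
      (X j.castSucc ^ 2 * X j.succ ^ 2 : MvPolynomial (Fin (n + 1)) 𝕜) =
      (X 0 : MvPolynomial (Fin 2) 𝕜) ^ 2 * X 1 ^ 2 := by
    rw [Finset.sum_eq_single k]
    · rw [map_mul, map_pow, map_pow, aeval_X, aeval_X, PathNZD.fk_castSucc, PathNZD.fk_succ]
    · intro j _ hj
      rw [map_mul, map_pow, map_pow, aeval_X, aeval_X]
      have hjk : (j : ℕ) ≠ (k : ℕ) := fun h => hj (Fin.ext h)
      by_cases hjc : (j : ℕ) = (k : ℕ) + 1
      · have hz : PathNZD.fk 𝕜 k j.succ = 0 := by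
          apply PathNZD.fk_eq_zero <;> intro h <;>
            (have := congrArg Fin.val h;
             simp only [Fin.val_succ, Fin.coe_castSucc] at this; omega)
        rw [hz, zero_pow two_ne_zero, mul_zero]
      · have hz : PathNZD.fk 𝕜 k j.castSucc = 0 := by
          apply PathNZD.fk_eq_zero <;> intro h <;>
            (have := congrArg Fin.val h;
             simp only [Fin.val_succ, Fin.coe_castSucc] at this; omega)
        rw [hz, zero_pow two_ne_zero, zero_mul]
    · intro hk'; exact absurd (Finset.mem_univ k) hk'
  rw [hg] at h1
  have hXX : (X 0 : MvPolynomial (Fin 2) 𝕜) ^ 2 * X 1 ^ 2 ≠ 0 :=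
    mul_ne_zero (pow_ne_zero _ (X_ne_zero _)) (pow_ne_zero _ (X_ne_zero _))
  exact hk ((mul_eq_zero.mp h1).resolve_right hXX)

end
end

section
/- Let $S = \Bbbk[x_1, \dots, x_n]$ and let $I$ be a codimension 2 homogeneous prime binomial ideal minimally generated by 3 elements, with Hilbert-Burch matrix whose entries are monomials $u_1, \dots, u_6$, so that $I = (u_1 u_5 - u_2 u_4,\ u_3 u_4 - u_1 u_6,\ u_2 u_6 - u_3 u_5)$. Then each generator $f_i$ of $I$ is a difference of two coprime monomials of the same degree; i.e., for each $i$ there exist $a_i, b_i \in \mathbb{N}^n$ with $f_i = x^{a_i} - x^{b_i}$, $|a_i| = |b_i|$, and $\gcd(x^{a_i}, x^{b_i}) = 1$. -/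
noncomputable section

open MvPolynomial

attribute [local instance] MvPolynomial.gradedAlgebra

namespace HBAux

variable {𝕜 : Type*} [Field 𝕜] {N : ℕ}

lemma sum_eq_degree (a : Fin N →₀ ℕ) : (a.sum fun _ m => m) = a.degree := rfl

lemma degree_add' (a b : Fin N →₀ ℕ) : (a + b).degree = a.degree + b.degree := by
  simp [Finsupp.degree_eq_weight_one, map_add]

lemma degree_sub_add {a m : Fin N →₀ ℕ} (h : a ≤ m) :
    (m - a).degree + a.degree = m.degree := by
  rw [← degree_add', tsub_add_cancel_of_le h]

lemma hc_mul_monomial (e : ℕ) (α : MvPolynomial (Fin N) 𝕜) (a : Fin N →₀ ℕ) :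
    homogeneousComponent e (α * monomial a (1 : 𝕜)) =
      if a.degree ≤ e then homogeneousComponent (e - a.degree) α * monomial a 1 else 0 := by
  ext m
  rw [coeff_homogeneousComponent, coeff_mul_monomial']
  by_cases ham : a ≤ m
  · have h1 : (m - a).degree + a.degree = m.degree := degree_sub_add ham
    rw [if_pos ham, mul_one, apply_ite (coeff m), coeff_mul_monomial', if_pos ham, mul_one,
      coeff_homogeneousComponent]
    split_ifs with h2 h3 h4 <;> first | rfl | omega
  · rw [if_neg ham, apply_ite (coeff m), coeff_mul_monomial', if_neg ham]
    split_ifs <;> simp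

lemma binomial_mem_homogeneousSubmodule {a b : Fin N →₀ ℕ} (hab : a.degree = b.degree) :
    monomial a (1 : 𝕜) - monomial b 1 ∈ homogeneousSubmodule (Fin N) 𝕜 a.degree :=
  sub_mem (mem_homogeneousSubmodule _ _ |>.mpr (isHomogeneous_monomial _ rfl))
    (mem_homogeneousSubmodule _ _ |>.mpr (isHomogeneous_monomial _ hab.symm))

lemma hc_mul_binomial (e : ℕ) (α : MvPolynomial (Fin N) 𝕜) {a b : Fin N →₀ ℕ}
    (hab : a.degree = b.degree) :
    homogeneousComponent e (α * (monomial a (1 : 𝕜) - monomial b 1)) ∈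
      Ideal.span {monomial a (1 : 𝕜) - monomial b 1} := by
  rw [mul_sub, map_sub, hc_mul_monomial, hc_mul_monomial, ← hab]
  split_ifs with h
  · rw [← mul_sub]
    exact Ideal.mem_span_singleton'.mpr ⟨_, rfl⟩
  · simp

lemma hc_mul_binomial_zero (e : ℕ) (α : MvPolynomial (Fin N) 𝕜) {a b : Fin N →₀ ℕ}
    (hab : a.degree = b.degree) (he : e < a.degree) :
    homogeneousComponent e (α * (monomial a (1 : 𝕜) - monomial b 1)) = 0 := by
  rw [mul_sub, map_sub, hc_mul_monomial, hc_mul_monomial, ← hab,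
    if_neg (not_le.mpr he), if_neg (not_le.mpr he), sub_zero]

lemma comp_mem {I : Ideal (MvPolynomial (Fin N) 𝕜)}
    (hh : Ideal.IsHomogeneous (homogeneousSubmodule (Fin N) 𝕜) I)
    {p : MvPolynomial (Fin N) 𝕜} (hp : p ∈ I) (n : ℕ) :
    homogeneousComponent n p ∈ I := by
  have := hh n hp
  rwa [← DirectSum.Decomposition.decompose'_eq,
    MvPolynomial.decomposition.decompose'_apply] at this

lemma eval_ones_binomial (a b : Fin N →₀ ℕ) :
    eval (fun _ => (1 : 𝕜)) (monomial a (1 : 𝕜) - monomial b 1) = 0 := by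
  simp [eval_monomial, Finsupp.prod]

lemma eq_degree {I : Ideal (MvPolynomial (Fin N) 𝕜)}
    (hh : Ideal.IsHomogeneous (homogeneousSubmodule (Fin N) 𝕜) I)
    (heval : ∀ q ∈ I, eval (fun _ => (1 : 𝕜)) q = 0)
    {a b : Fin N →₀ ℕ} (h : monomial a (1 : 𝕜) - monomial b 1 ∈ I) :
    a.degree = b.degree := by
  by_contra hne
  have h1 := comp_mem hh h a.degree
  rw [map_sub,
    homogeneousComponent_of_mem (mem_homogeneousSubmodule _ _ |>.mpr
      (isHomogeneous_monomial (1 : 𝕜) rfl)), if_pos rfl,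
    homogeneousComponent_of_mem (mem_homogeneousSubmodule _ _ |>.mpr
      (isHomogeneous_monomial (1 : 𝕜) rfl)), if_neg hne, sub_zero] at h1
  have h2 := heval _ h1
  simp [eval_monomial, Finsupp.prod] at h2

lemma coprime_key (I : Ideal (MvPolynomial (Fin N) 𝕜)) (hprime : I.IsPrime)
    (heval : ∀ q ∈ I, eval (fun _ => (1 : 𝕜)) q = 0)
    (p₀ p₁ p₂ : MvPolynomial (Fin N) 𝕜) (a₀ b₀ a₁ b₁ a₂ b₂ : Fin N →₀ ℕ)
    (h₀ : p₀ = monomial a₀ (1 : 𝕜) - monomial b₀ 1) (e₀ : a₀.degree = b₀.degree)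
    (h₁ : p₁ = monomial a₁ (1 : 𝕜) - monomial b₁ 1) (e₁ : a₁.degree = b₁.degree)
    (h₂ : p₂ = monomial a₂ (1 : 𝕜) - monomial b₂ 1) (e₂ : a₂.degree = b₂.degree)
    (hI : I = Ideal.span {p₀, p₁, p₂})
    (hmin₀ : p₀ ∉ Ideal.span {p₁, p₂}) :
    ∀ j, min (a₀ j) (b₀ j) = 0 := by
  by_contra hcon
  push_neg at hcon
  obtain ⟨j₀, hj₀⟩ := hcon
  set c : Fin N →₀ ℕ := a₀ ⊓ b₀ with hc
  have hca : c ≤ a₀ := inf_le_left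
  have hcb : c ≤ b₀ := inf_le_right
  have hcne : c ≠ 0 := by
    intro h
    apply hj₀
    have := DFunLike.congr_fun h j₀
    simpa [hc, Finsupp.inf_apply] using this
  set a' : Fin N →₀ ℕ := a₀ - c with ha'
  set b' : Fin N →₀ ℕ := b₀ - c with hb'
  have haa : a₀ = c + a' := by rw [ha', add_tsub_cancel_of_le hca]
  have hbb : b₀ = c + b' := by rw [hb', add_tsub_cancel_of_le hcb]
  set g : MvPolynomial (Fin N) 𝕜 := monomial a' 1 - monomial b' 1 with hg
  have hfac : p₀ = monomial c 1 * g := by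
    rw [h₀, hg, mul_sub, monomial_mul, monomial_mul, one_mul, ← haa, ← hbb]
  have hp₀I : p₀ ∈ I := by
    rw [hI]; exact Ideal.subset_span (by simp)
  have hcnotI : monomial c (1 : 𝕜) ∉ I := by
    intro h
    have := heval _ h
    simp [eval_monomial, Finsupp.prod] at this
  have hgI : g ∈ I := ((hprime.mem_or_mem (hfac ▸ hp₀I)).resolve_left hcnotI)
  -- degrees
  have hdeg_a : a₀.degree = c.degree + a'.degree := by rw [haa, degree_add']
  have hdeg_b : b₀.degree = c.degree + b'.degree := by rw [hbb, degree_add']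
  have hab' : a'.degree = b'.degree := by omega
  have hcdeg : c.degree ≠ 0 := fun h => hcne (Finsupp.degree_eq_zero_iff c |>.mp h)
  have hlt : a'.degree < a₀.degree := by omega
  -- representation of g
  rw [hI, show ({p₀, p₁, p₂} : Set (MvPolynomial (Fin N) 𝕜)) =
    insert p₀ (insert p₁ {p₂}) from rfl] at hgI
  obtain ⟨α, z, hz, hgrep⟩ := Ideal.mem_span_insert.mp hgI
  obtain ⟨β, w, hw, hzrep⟩ := Ideal.mem_span_insert.mp hz
  obtain ⟨γ, hwrep⟩ := Ideal.mem_span_singleton'.mp hw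
  have hgrep' : g = α * p₀ + β * p₁ + γ * p₂ := by
    rw [hgrep, hzrep, ← hwrep]; ring
  -- apply homogeneous component of degree a'.degree
  have hgcomp : homogeneousComponent a'.degree g = g := by
    rw [homogeneousComponent_of_mem (binomial_mem_homogeneousSubmodule hab'), if_pos rfl]
  have key : g ∈ Ideal.span {p₁, p₂} := by
    rw [← hgcomp, hgrep', map_add, map_add]
    rw [h₀, hc_mul_binomial_zero _ _ e₀ hlt, zero_add]
    apply add_mem
    · rw [h₁]
      exact Ideal.span_mono (by simp) (hc_mul_binomial _ _ e₁)
    · rw [h₂]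
      refine Ideal.span_mono (by simp) (hc_mul_binomial _ _ e₂) 
  exact hmin₀ (hfac ▸ Ideal.mul_mem_left _ _ key)

end HBAux

theorem hilbert_burch_binomial_generators' (𝕜 : Type*) [Field 𝕜] (N : ℕ) (hN : 2 ≤ N)
    (u : Fin 6 → MvPolynomial (Fin N) 𝕜) (eexp : Fin 6 → (Fin N →₀ ℕ))
    (hu : ∀ i, u i = monomial (eexp i) (1 : 𝕜))
    (f : Fin 3 → MvPolynomial (Fin N) 𝕜)
    (hf0 : f 0 = u 0 * u 4 - u 1 * u 3)
    (hf1 : f 1 = u 2 * u 3 - u 0 * u 5)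
    (hf2 : f 2 = u 1 * u 5 - u 2 * u 4)
    (I : Ideal (MvPolynomial (Fin N) 𝕜)) (hI : I = Ideal.span {f 0, f 1, f 2})
    (hprime : I.IsPrime)
    (hhomog : Ideal.IsHomogeneous (homogeneousSubmodule (Fin N) 𝕜) I)
    (hmin : ∀ i : Fin 3, f i ∉ Ideal.span {f j | j ≠ i}) :
    ∀ i : Fin 3, ∃ a b : Fin N →₀ ℕ,
      f i = monomial a (1 : 𝕜) - monomial b (1 : 𝕜) ∧
      (a.sum fun _ m => m) = (b.sum fun _ m => m) ∧
      ∀ j, min (a j) (b j) = 0 := by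
  have hub : ∀ i j : Fin 6, u i * u j = monomial (eexp i + eexp j) (1 : 𝕜) := by
    intro i j; rw [hu, hu, monomial_mul, one_mul]
  have hfb0 : f 0 = monomial (eexp 0 + eexp 4) (1 : 𝕜) - monomial (eexp 1 + eexp 3) 1 := by
    rw [hf0, hub, hub]
  have hfb1 : f 1 = monomial (eexp 2 + eexp 3) (1 : 𝕜) - monomial (eexp 0 + eexp 5) 1 := by
    rw [hf1, hub, hub]
  have hfb2 : f 2 = monomial (eexp 1 + eexp 5) (1 : 𝕜) - monomial (eexp 2 + eexp 4) 1 := by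
    rw [hf2, hub, hub]
  have heval : ∀ q ∈ I, eval (fun _ => (1 : 𝕜)) q = 0 := by
    intro q hq
    rw [hI] at hq
    have hle : Ideal.span {f 0, f 1, f 2} ≤ RingHom.ker (eval (fun _ => (1 : 𝕜))) := by
      rw [Ideal.span_le]
      rintro x hx
      simp only [Set.mem_insert_iff, Set.mem_singleton_iff] at hx
      rcases hx with rfl | rfl | rfl
      · rw [SetLike.mem_coe, RingHom.mem_ker, hfb0]; exact HBAux.eval_ones_binomial _ _
      · rw [SetLike.mem_coe, RingHom.mem_ker, hfb1]; exact HBAux.eval_ones_binomial _ _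
      · rw [SetLike.mem_coe, RingHom.mem_ker, hfb2]; exact HBAux.eval_ones_binomial _ _
    exact hle hq
  have hfI : ∀ k : Fin 3, f k ∈ I := by
    intro k; rw [hI]; apply Ideal.subset_span; fin_cases k <;> simp
  have hd0 : (eexp 0 + eexp 4).degree = (eexp 1 + eexp 3).degree :=
    HBAux.eq_degree hhomog heval (hfb0 ▸ hfI 0)
  have hd1 : (eexp 2 + eexp 3).degree = (eexp 0 + eexp 5).degree :=
    HBAux.eq_degree hhomog heval (hfb1 ▸ hfI 1)
  have hd2 : (eexp 1 + eexp 5).degree = (eexp 2 + eexp 4).degree :=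
    HBAux.eq_degree hhomog heval (hfb2 ▸ hfI 2)
  have hmin0 : f 0 ∉ Ideal.span {f 1, f 2} := by
    intro h
    refine hmin 0 (Ideal.span_mono ?_ h)
    rintro x (rfl | rfl)
    exacts [⟨1, by decide, rfl⟩, ⟨2, by decide, rfl⟩]
  have hmin1 : f 1 ∉ Ideal.span {f 0, f 2} := by
    intro h
    refine hmin 1 (Ideal.span_mono ?_ h)
    rintro x (rfl | rfl)
    exacts [⟨0, by decide, rfl⟩, ⟨2, by decide, rfl⟩]
  have hmin2 : f 2 ∉ Ideal.span {f 0, f 1} := by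
    intro h
    refine hmin 2 (Ideal.span_mono ?_ h)
    rintro x (rfl | rfl)
    exacts [⟨0, by decide, rfl⟩, ⟨1, by decide, rfl⟩]
  have hI1 : I = Ideal.span {f 1, f 0, f 2} := by
    rw [hI, Set.insert_comm]
  have hI2 : I = Ideal.span {f 2, f 0, f 1} := by
    rw [hI, Set.pair_comm (f 1) (f 2), Set.insert_comm]
  intro i
  fin_cases i
  · exact ⟨_, _, hfb0, hd0,
      HBAux.coprime_key I hprime heval (f 0) (f 1) (f 2) _ _ _ _ _ _
        hfb0 hd0 hfb1 hd1 hfb2 hd2 hI hmin0⟩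
  · exact ⟨_, _, hfb1, hd1,
      HBAux.coprime_key I hprime heval (f 1) (f 0) (f 2) _ _ _ _ _ _
        hfb1 hd1 hfb0 hd0 hfb2 hd2 hI1 hmin1⟩
  · exact ⟨_, _, hfb2, hd2,
      HBAux.coprime_key I hprime heval (f 2) (f 0) (f 1) _ _ _ _ _ _
        hfb2 hd2 hfb0 hd0 hfb1 hd1 hI2 hmin2⟩


/-- from the proof of Theorem 4.9: let `I ⊆ S = 𝕜[x₁,…,x_N]` be a
codimension 2 homogeneous prime binomial ideal, minimally generated by the three
elements `f₁ = u₁u₅ - u₂u₄`, `f₂ = u₃u₄ - u₁u₆`, `f₃ = u₂u₆ - u₃u₅` coming from a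
Hilbert-Burch matrix with monomial entries `u₁,…,u₆`.  Then each `fᵢ` is a
difference of two coprime monomials of the same degree. -/
theorem hilbert_burch_binomial_generators (𝕜 : Type*) [Field 𝕜] (N : ℕ) (hN : 2 ≤ N)
    -- the monomial entries of the Hilbert-Burch matrix:
    (u : Fin 6 → MvPolynomial (Fin N) 𝕜) (eexp : Fin 6 → (Fin N →₀ ℕ))
    (hu : ∀ i, u i = monomial (eexp i) (1 : 𝕜))
    -- the three generators:
    (f : Fin 3 → MvPolynomial (Fin N) 𝕜)
    (hf0 : f 0 = u 0 * u 4 - u 1 * u 3)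
    (hf1 : f 1 = u 2 * u 3 - u 0 * u 5)
    (hf2 : f 2 = u 1 * u 5 - u 2 * u 4)
    (I : Ideal (MvPolynomial (Fin N) 𝕜)) (hI : I = Ideal.span {f 0, f 1, f 2})
    -- `I` is a homogeneous prime (hence toric) ideal:
    (hprime : I.IsPrime)
    (hhomog : Ideal.IsHomogeneous (homogeneousSubmodule (Fin N) 𝕜) I)
    -- `I` has codimension 2:
    (hcodim : ringKrullDim (MvPolynomial (Fin N) 𝕜 ⧸ I) = ((N - 2 : ℕ) : WithBot ℕ∞))
    -- `I` is minimally generated by the three elements `f₀, f₁, f₂`: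
    (hmin : ∀ i : Fin 3, f i ∉ Ideal.span {f j | j ≠ i})
    (hmin3 : ¬ ∃ g₁ g₂ : MvPolynomial (Fin N) 𝕜, I = Ideal.span {g₁, g₂})
    -- the Hilbert-Burch resolution `0 → S² → S³ → S → S/I → 0` is exact:
    (M : Matrix (Fin 3) (Fin 2) (MvPolynomial (Fin N) 𝕜))
    (hM : M = Matrix.of ![![u 0, u 3], ![u 1, u 4], ![u 2, u 5]])
    (hinj : LinearMap.ker M.mulVecLin = ⊥)
    (hexact : LinearMap.range M.mulVecLin =
      LinearMap.ker (Matrix.of ![![f 0, f 1, f 2]]).mulVecLin) :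
    ∀ i : Fin 3, ∃ a b : Fin N →₀ ℕ,
      f i = monomial a (1 : 𝕜) - monomial b (1 : 𝕜) ∧
      (a.sum fun _ m => m) = (b.sum fun _ m => m) ∧
      ∀ j, min (a j) (b j) = 0 := by
  exact hilbert_burch_binomial_generators' 𝕜 N hN u eexp hu f hf0 hf1 hf2 I hI hprime hhomog hmin

end
end
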